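/- arXiv:2112.07611 — 7 statements merged into one kernel-verified Lean document; each statement's English description precedes it below -/
import Mathlib

section
/- Let d ≥ 1 and let A be a d×d complex matrix. For every pair of indices i ≠ j such that the entry A_{ij} is nonzero, the matrix unit E_{ij} (the matrix with entry 1 at position (i,j) and 0 elsewhere) belongs to the complex Lie subalgebra of gl(d,ℂ) generated by the set of all diagonal matrices together with A. Consequently this generated Lie subalgebra contains the direct sum of the space of all diagonal matrices and the one-dimensional root spaces ℂ·E_{ij} for all pairs (i,j) in the index set I of nonzero off-diagonal entries of A. -/
attribute [local instance 100] LieRing.ofAssociativeRing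

/-!
For orthogonal idempotents `e`, `f` the Lie words `⁅⁅e, a⁆, f⁆ = e a f + f a e` and
`⁅e, ⁅⁅e, a⁆, f⁆⁆ = e a f - f a e` add up to `2 e a f`, so a Lie subalgebra containing
`e`, `f`, `a` contains the Peirce corner `e a f` once `2` is invertible. With
`e = E i i`, `f = E j j` this corner is `A i j • E i j`.
-/

theorem lie_lie_add_lie_lie_lie_eq_two_mul {A : Type*} [Ring A] {e f : A}
    (he : IsIdempotentElem e) (hef : e * f = 0) (hfe : f * e = 0) (a : A) :
    ⁅⁅e, a⁆, f⁆ + ⁅e, ⁅⁅e, a⁆, f⁆⁆ = 2 * (e * a * f) := by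
  have hee : e * e = e := he
  simp only [Ring.lie_def, mul_sub, sub_mul, ← mul_assoc, hee, hef, hfe, zero_mul, mul_zero]
  simp only [mul_assoc, hee, hef, hfe, zero_mul, mul_zero]
  noncomm_ring

theorem LieSubalgebra.mul_mul_mem_of_isIdempotentElem {K A : Type*} [Field K] [Ring A]
    [Algebra K A] (h2 : (2 : K) ≠ 0) (L : LieSubalgebra K A) {e f a : A}
    (he : IsIdempotentElem e) (hef : e * f = 0) (hfe : f * e = 0)
    (heL : e ∈ L) (hfL : f ∈ L) (haL : a ∈ L) : e * a * f ∈ L := by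
  have hmem : ⁅⁅e, a⁆, f⁆ + ⁅e, ⁅⁅e, a⁆, f⁆⁆ ∈ L :=
    L.add_mem (L.lie_mem (L.lie_mem heL haL) hfL)
      (L.lie_mem heL (L.lie_mem (L.lie_mem heL haL) hfL))
  rw [lie_lie_add_lie_lie_lie_eq_two_mul he hef hfe, two_mul, ← two_smul K] at hmem
  simpa [inv_smul_smul₀ h2] using L.smul_mem (2 : K)⁻¹ hmem

namespace Matrix

theorem isDiag_single_self {n α : Type*} [DecidableEq n] [Zero α] (i : n) (c : α) :
    (single i i c).IsDiag :=
  diagonal_single i c ▸ isDiag_diagonal _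

theorem single_mem_lieSubalgebra_of_apply_ne_zero {n K : Type*} [Fintype n] [DecidableEq n]
    [Field K] (h2 : (2 : K) ≠ 0)
    (L : LieSubalgebra K (Matrix n n K)) {A : Matrix n n K} {i j : n} (hij : i ≠ j)
    (hA : A i j ≠ 0) (hiL : single i i 1 ∈ L) (hjL : single j j 1 ∈ L) (hAL : A ∈ L) :
    single i j 1 ∈ L := by
  have hcorner : single i i 1 * A * single j j 1 ∈ L :=
    L.mul_mul_mem_of_isIdempotentElem h2 (by simp [IsIdempotentElem])
      (by simp [hij]) (by simp [hij.symm]) hiL hjL hAL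
  rw [single_mul_mul_single, one_mul, mul_one] at hcorner
  simpa [hA, smul_single] using L.smul_mem (A i j)⁻¹ hcorner

end Matrix

theorem stmt_0_general (d : ℕ) (A : Matrix (Fin d) (Fin d) ℂ) :
    (∀ i j : Fin d, i ≠ j → A i j ≠ 0 →
      Matrix.single i j (1 : ℂ) ∈
        LieSubalgebra.lieSpan ℂ (Matrix (Fin d) (Fin d) ℂ)
          ({M : Matrix (Fin d) (Fin d) ℂ | M.IsDiag} ∪ {A})) ∧
    (Submodule.span ℂ ({M : Matrix (Fin d) (Fin d) ℂ | M.IsDiag} ∪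
        {M : Matrix (Fin d) (Fin d) ℂ | ∃ i j : Fin d, i ≠ j ∧ A i j ≠ 0 ∧
          ∃ c : ℂ, M = c • Matrix.single i j (1 : ℂ)}) ≤
      (LieSubalgebra.lieSpan ℂ (Matrix (Fin d) (Fin d) ℂ)
          ({M : Matrix (Fin d) (Fin d) ℂ | M.IsDiag} ∪ {A})).toSubmodule) := by
  set L := LieSubalgebra.lieSpan ℂ (Matrix (Fin d) (Fin d) ℂ)
    ({M : Matrix (Fin d) (Fin d) ℂ | M.IsDiag} ∪ {A})
  have hdiag : ∀ k, Matrix.single k k (1 : ℂ) ∈ L := fun k =>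
    LieSubalgebra.subset_lieSpan (Or.inl (Matrix.isDiag_single_self k 1))
  have hroot : ∀ i j : Fin d, i ≠ j → A i j ≠ 0 → Matrix.single i j (1 : ℂ) ∈ L :=
    fun i j hij hA => Matrix.single_mem_lieSubalgebra_of_apply_ne_zero two_ne_zero L hij hA
      (hdiag i) (hdiag j) (LieSubalgebra.subset_lieSpan (Or.inr rfl))
  refine ⟨hroot, Submodule.span_le.mpr ?_⟩
  rintro M (hM | ⟨i, j, hij, hA, c, rfl⟩)
  · exact LieSubalgebra.subset_lieSpan (Or.inl hM)
  · exact L.smul_mem c (hroot i j hij hA)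

/-- Let `d ≥ 1` and `A` a `d × d` complex matrix. For every pair of indices
`i ≠ j` with `A i j ≠ 0`, the matrix unit `E i j` lies in the complex Lie subalgebra of
`gl(d, ℂ)` (matrices with the commutator bracket) generated by all diagonal matrices together
with `A`; consequently this Lie subalgebra contains the (direct) sum of the space of diagonal
matrices and the root spaces `ℂ • E i j` for `(i, j)` ranging over the nonzero off-diagonal
index set of `A`. -/
theorem stmt_0 (d : ℕ) (hd : 1 ≤ d) (A : Matrix (Fin d) (Fin d) ℂ) :
    (∀ i j : Fin d, i ≠ j → A i j ≠ 0 →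
      Matrix.single i j (1 : ℂ) ∈
        LieSubalgebra.lieSpan ℂ (Matrix (Fin d) (Fin d) ℂ)
          ({M : Matrix (Fin d) (Fin d) ℂ | M.IsDiag} ∪ {A})) ∧
    (Submodule.span ℂ ({M : Matrix (Fin d) (Fin d) ℂ | M.IsDiag} ∪
        {M : Matrix (Fin d) (Fin d) ℂ | ∃ i j : Fin d, i ≠ j ∧ A i j ≠ 0 ∧
          ∃ c : ℂ, M = c • Matrix.single i j (1 : ℂ)}) ≤
      (LieSubalgebra.lieSpan ℂ (Matrix (Fin d) (Fin d) ℂ)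
          ({M : Matrix (Fin d) (Fin d) ℂ | M.IsDiag} ∪ {A})).toSubmodule) :=
  stmt_0_general d A
end

section
/- Let d ≥ 1 and let S be a symmetric, irreflexive set of pairs of indices from {1,…,d} such that the simple graph on {1,…,d} whose edges are the pairs in S is connected. Then the complex Lie subalgebra of gl(d,ℂ) generated by the set of all diagonal matrices together with the matrix units {E_{ij} : (i,j) ∈ S} is all of gl(d,ℂ). -/
attribute [local instance 100] LieRing.ofAssociativeRing

/-!
Since `⁅E i k, E k j⁆ = E i j` for `i ≠ j`, following a walk `i = k₀, k₁, …, k_m = j` in the graph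
produces every off-diagonal matrix unit from the edge units; the diagonal units `E i i` are
diagonal matrices, and the matrix units span `gl(d, ℂ)`.
-/

open Matrix

namespace Matrix

theorem lie_single_single_of_ne {n R : Type*} [Fintype n] [DecidableEq n] [Ring R]
    {i j : n} (k : n) (hij : i ≠ j) (a b : R) :
    ⁅single i k a, single k j b⁆ = single i j (a * b) := by
  rw [Ring.lie_def, single_mul_single_same, single_mul_single_of_ne (h := hij.symm), sub_zero]

end Matrix

namespace LieSubalgebra

variable {n R : Type*} [Fintype n] [DecidableEq n] [CommRing R]
  {G : SimpleGraph n} (L : LieSubalgebra R (Matrix n n R))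

theorem single_mem_of_walk (hadj : ∀ i j, G.Adj i j → single i j (1 : R) ∈ L)
    {i j : n} (hij : i ≠ j) (p : G.Walk i j) : single i j (1 : R) ∈ L := by
  induction p with
  | nil => exact absurd rfl hij
  | @cons i k j hik q ih =>
    by_cases hkj : k = j
    · subst hkj
      exact hadj i k hik
    · simpa [lie_single_single_of_ne k hij] using L.lie_mem (hadj i k hik) (ih hkj)

theorem eq_top_of_isDiag_subset_of_preconnected (hdiag : {M : Matrix n n R | M.IsDiag} ⊆ L)
    (hadj : ∀ i j, G.Adj i j → single i j (1 : R) ∈ L) (hG : G.Preconnected) : L = ⊤ := by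
  have hsingle : ∀ i j (c : R), single i j c ∈ L := by
    intro i j c
    by_cases hij : i = j
    · subst hij
      exact hdiag (diagonal_single i c ▸ isDiag_diagonal _)
    · simpa using L.smul_mem c (single_mem_of_walk L hadj hij (hG i j).some)
  rw [eq_top_iff]
  intro M _
  rw [matrix_eq_sum_single M]
  exact L.sum_mem fun i _ => L.sum_mem fun j _ => hsingle i j (M i j)

end LieSubalgebra

theorem stmt_1_general (d : ℕ) (S : Set (Fin d × Fin d))
    (hsymm : ∀ i j : Fin d, (i, j) ∈ S → (j, i) ∈ S)
    (hirr : ∀ i : Fin d, (i, i) ∉ S)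
    (hconn : (SimpleGraph.mk (fun i j => (i, j) ∈ S)
        ⟨fun i j h => hsymm i j h⟩ ⟨fun i h => hirr i h⟩).Connected) :
    LieSubalgebra.lieSpan ℂ (Matrix (Fin d) (Fin d) ℂ)
      ({M : Matrix (Fin d) (Fin d) ℂ | M.IsDiag} ∪
        {M : Matrix (Fin d) (Fin d) ℂ | ∃ p ∈ S, M = Matrix.single p.1 p.2 (1 : ℂ)}) =
      ⊤ :=
  LieSubalgebra.eq_top_of_isDiag_subset_of_preconnected _
    (Set.subset_union_left.trans LieSubalgebra.subset_lieSpan)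
    (fun i j hij => LieSubalgebra.subset_lieSpan (Or.inr ⟨(i, j), hij, rfl⟩))
    hconn.preconnected

/-- Let `d ≥ 1` and let `S` be a symmetric, irreflexive set of pairs of indices
from `{1, …, d}` such that the simple graph on `Fin d` whose edges are the pairs in `S` is
connected. Then the complex Lie subalgebra of `gl(d, ℂ)` generated by all diagonal matrices
together with the matrix units `E i j` for `(i, j) ∈ S` is all of `gl(d, ℂ)`. -/
theorem stmt_1 (d : ℕ) (hd : 1 ≤ d) (S : Set (Fin d × Fin d))
    (hsymm : ∀ i j : Fin d, (i, j) ∈ S → (j, i) ∈ S)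
    (hirr : ∀ i : Fin d, (i, i) ∉ S)
    (hconn : (SimpleGraph.mk (fun i j => (i, j) ∈ S)
        ⟨fun i j h => hsymm i j h⟩ ⟨fun i h => hirr i h⟩).Connected) :
    LieSubalgebra.lieSpan ℂ (Matrix (Fin d) (Fin d) ℂ)
      ({M : Matrix (Fin d) (Fin d) ℂ | M.IsDiag} ∪
        {M : Matrix (Fin d) (Fin d) ℂ | ∃ p ∈ S, M = Matrix.single p.1 p.2 (1 : ℂ)}) =
      ⊤ :=
  stmt_1_general d S hsymm hirr hconn
end

section
/- Let d ≥ 1 and let H be a Hermitian d×d complex matrix that is path-connected, i.e., the simple graph on {1,…,d} in which i and j are adjacent exactly when i ≠ j and H_{ij} ≠ 0 is connected. Then the complex Lie subalgebra of gl(d,ℂ) generated by the set of all diagonal matrices together with H equals all of gl(d,ℂ). -/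
attribute [local instance 100] LieRing.ofAssociativeRing

open Matrix

/-! For `i ≠ j` the matrix units `p = E_ii` and `q = E_jj` are orthogonal idempotents, and
`⁅p, ⁅q, H⁆⁆ + ⁅p, ⁅p, ⁅q, H⁆⁆⁆ = -2 p H q = -2 H_ij E_ij`, so every edge `i – j` of the graph
of `H` puts `E_ij` into the Lie algebra (in both directions, `H` being Hermitian).
Since `⁅E_ij, E_jk⁆ = E_ik` for `i ≠ k`, matrix units propagate along paths, and connectivity
yields every `E_ij`. -/

section OrthogonalIdempotents

variable {A : Type*} [Ring A] {p q : A}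

theorem lie_lie_add_lie_lie_lie_of_mul_eq_zero (hp : IsIdempotentElem p) (hpq : p * q = 0)
    (hqp : q * p = 0) (x : A) :
    ⁅p, ⁅q, x⁆⁆ + ⁅p, ⁅p, ⁅q, x⁆⁆⁆ = -(2 • (p * x * q)) := by
  have hpq' : ∀ y, p * (q * y) = 0 := fun y => by rw [← mul_assoc, hpq, zero_mul]
  have hpp' : ∀ y, p * (p * y) = p * y := fun y => by rw [← mul_assoc, hp.eq]
  simp only [Ring.lie_def, mul_sub, sub_mul, mul_assoc, hqp, hp.eq, hpq', hpp', mul_zero]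
  noncomm_ring

theorem LieSubalgebra.mul_mul_mem_of_mul_eq_zero {K : Type*} [Field K] [CharZero K]
    [Algebra K A] (L : LieSubalgebra K A) (hp : IsIdempotentElem p) (hpq : p * q = 0)
    (hqp : q * p = 0) {x : A} (hpL : p ∈ L) (hqL : q ∈ L) (hxL : x ∈ L) : p * x * q ∈ L := by
  have h : -(2 • (p * x * q)) ∈ L := by
    rw [← lie_lie_add_lie_lie_lie_of_mul_eq_zero hp hpq hqp x]
    have hpqx := L.lie_mem hpL (L.lie_mem hqL hxL)
    exact L.add_mem hpqx (L.lie_mem hpL hpqx)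
  have := L.smul_mem (-(2 : K)⁻¹) h
  rwa [smul_neg, neg_smul, neg_neg, ← Nat.cast_smul_eq_nsmul K, smul_smul, Nat.cast_ofNat,
    inv_mul_cancel₀ two_ne_zero, one_smul] at this

end OrthogonalIdempotents

section MatrixLieSubalgebra

variable {n K : Type*} [Fintype n] [DecidableEq n]

theorem single_mem_of_apply_ne_zero [Field K] [CharZero K] {L : LieSubalgebra K (Matrix n n K)}
    (hdiag : ∀ i c, single i i c ∈ L) {H : Matrix n n K}
    (hH : H ∈ L) {i j : n} (hij : i ≠ j) (hHij : H i j ≠ 0) (c : K) : single i j c ∈ L := by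
  have hidem : IsIdempotentElem (single i i (1 : K)) := by
    rw [IsIdempotentElem, single_mul_single_same, one_mul]
  have h := L.mul_mul_mem_of_mul_eq_zero hidem (single_mul_single_of_ne 1 i i j hij 1)
    (single_mul_single_of_ne 1 j j i hij.symm 1) (hdiag i 1) (hdiag j 1) hH
  rw [single_mul_mul_single, one_mul, mul_one] at h
  simpa [smul_single, hHij] using L.smul_mem (c / H i j) h

variable [CommRing K] {L : LieSubalgebra K (Matrix n n K)}

theorem single_mem_trans (hdiag : ∀ i c, single i i c ∈ L) {i j k : n}
    (hij : ∀ c, single i j c ∈ L) (hjk : ∀ c, single j k c ∈ L) (c : K) : single i k c ∈ L := by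
  rcases eq_or_ne i k with rfl | hik
  · exact hdiag i c
  · have hbracket : ⁅single i j c, single j k 1⁆ = single i k c := by
      rw [Ring.lie_def, single_mul_single_same, single_mul_single_of_ne _ _ _ _ hik.symm,
        mul_one, sub_zero]
    exact hbracket ▸ L.lie_mem (hij c) (hjk 1)

theorem LieSubalgebra.eq_top_of_forall_single_mem (h : ∀ i j c, single i j c ∈ L) : L = ⊤ := by
  refine eq_top_iff.2 fun M _ => ?_
  rw [matrix_eq_sum_single M]
  exact L.toSubmodule.sum_mem fun i _ => L.toSubmodule.sum_mem fun j _ => h i j (M i j)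

end MatrixLieSubalgebra

theorem stmt_2_general (d : ℕ) (H : Matrix (Fin d) (Fin d) ℂ)
    (hH : H.IsHermitian)
    (hconn : (SimpleGraph.fromRel (fun i j : Fin d => H i j ≠ 0)).Connected) :
    LieSubalgebra.lieSpan ℂ (Matrix (Fin d) (Fin d) ℂ)
      ({M : Matrix (Fin d) (Fin d) ℂ | M.IsDiag} ∪ {H}) = ⊤ := by
  set L := LieSubalgebra.lieSpan ℂ (Matrix (Fin d) (Fin d) ℂ)
      ({M : Matrix (Fin d) (Fin d) ℂ | M.IsDiag} ∪ {H})
  have hdiag : ∀ i c, single i i c ∈ L := fun i c =>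
    LieSubalgebra.subset_lieSpan (Or.inl (diagonal_single i c ▸ isDiag_diagonal _))
  have hHL : H ∈ L := LieSubalgebra.subset_lieSpan (Or.inr rfl)
  have hadj : ∀ i j, (SimpleGraph.fromRel fun i j : Fin d => H i j ≠ 0).Adj i j →
      ∀ c, single i j c ∈ L := by
    rintro i j ⟨hij, hHij | hHji⟩
    · exact single_mem_of_apply_ne_zero hdiag hHL hij hHij
    · exact single_mem_of_apply_ne_zero hdiag hHL hij (by simpa [← hH.apply i j] using hHji)
  refine LieSubalgebra.eq_top_of_forall_single_mem fun i j => ?_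
  exact Relation.ReflTransGen.trans_induction_on ((SimpleGraph.reachable_iff_reflTransGen i j).1
    (hconn i j)) hdiag (hadj _ _) fun _ _ => single_mem_trans hdiag

/-- Let `d ≥ 1` and let `H` be a Hermitian `d × d` complex matrix that is
path-connected: the simple graph on `Fin d` in which `i` and `j` are adjacent exactly when
`i ≠ j` and `H i j ≠ 0` is connected.  (Since `H` is Hermitian, `H i j ≠ 0 ↔ H j i ≠ 0`, so
this graph is `SimpleGraph.fromRel (fun i j => H i j ≠ 0)`.)  Then the complex Lie subalgebra
of `gl(d, ℂ)` generated by all diagonal matrices together with `H` is all of `gl(d, ℂ)`. -/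
theorem stmt_2 (d : ℕ) (hd : 1 ≤ d) (H : Matrix (Fin d) (Fin d) ℂ)
    (hH : H.IsHermitian)
    (hconn : (SimpleGraph.fromRel (fun i j : Fin d => H i j ≠ 0)).Connected) :
    LieSubalgebra.lieSpan ℂ (Matrix (Fin d) (Fin d) ℂ)
      ({M : Matrix (Fin d) (Fin d) ℂ | M.IsDiag} ∪ {H}) = ⊤ :=
  stmt_2_general d H hH hconn
end

section
/- Let d ≥ 1 and let H be a Hermitian d×d complex matrix that is path-connected, i.e., the simple graph on {1,…,d} in which i and j are adjacent exactly when i ≠ j and H_{ij} ≠ 0 is connected. Regard the d×d complex matrices as a Lie algebra over ℝ with the commutator bracket. Then the real Lie subalgebra generated by the set {i·D : D a diagonal matrix with real entries} together with i·H equals the unitary Lie algebra u(d), i.e., the set of all skew-Hermitian d×d complex matrices X (those with conjugate transpose equal to −X). -/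
/-!
Write `skewSingle j k z = z E_jk - z̄ E_kj`. For `j ≠ k` the double bracket `⁅i E_jj, ⁅i E_kk, M⁆⁆`
keeps only the `(j, k)` and `(k, j)` entries of `M`, so applied to `i H` it gives
`skewSingle j k c` with `c = i H_jk`, which is nonzero along every edge of the graph of `H`.
Bracketing with `i E_jj` turns `c` into `i c`, and `c, i c` span `ℂ` over `ℝ`, so every
`skewSingle j k z` lies in the Lie algebra. Since
`⁅skewSingle j k 1, skewSingle k l z⁆ = skewSingle j l z`, this spreads along paths, and
connectedness gives every off-diagonal direction. Together with the diagonal these span the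
skew-Hermitian matrices.
-/

open Matrix Complex

attribute [local instance] LieRing.ofAssociativeRing

section SkewAdjoint

variable (R A : Type*) [CommRing R] [StarRing R] [TrivialStar R] [Ring A] [StarRing A]
  [Algebra R A] [StarModule R A]

def LieSubalgebra.skewAdjoint : LieSubalgebra R A :=
  { (_root_.skewAdjoint A).toIntSubmodule with
    carrier := _root_.skewAdjoint A
    smul_mem' := fun r _ hx => skewAdjoint.smul_mem r hx
    lie_mem' := fun {x y} hx hy => by
      simp only [SetLike.mem_coe, skewAdjoint.mem_iff] at *
      rw [Ring.lie_def, star_sub, star_mul, star_mul, hx, hy]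
      noncomm_ring }

variable {R A} in
@[simp]
theorem LieSubalgebra.mem_skewAdjoint {x : A} :
    x ∈ LieSubalgebra.skewAdjoint R A ↔ star x = -x :=
  skewAdjoint.mem_iff

end SkewAdjoint

namespace Matrix

section Diagonal

variable {n R : Type*} [Fintype n] [DecidableEq n] [CommRing R]

theorem lie_diagonal_apply (D : n → R) (M : Matrix n n R) (a b : n) :
    ⁅diagonal D, M⁆ a b = (D a - D b) * M a b := by
  simp only [Ring.lie_def, sub_apply, diagonal_mul, mul_diagonal]
  ring

theorem lie_diagonal_single (D : n → R) (j k : n) (c : R) :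
    ⁅diagonal D, single j k c⁆ = single j k ((D j - D k) * c) := by
  ext a b
  rw [lie_diagonal_apply]
  by_cases h : j = a ∧ k = b
  · obtain ⟨rfl, rfl⟩ := h
    simp
  · simp [h]

end Diagonal

variable {n : Type*} [DecidableEq n]

def skewSingle (j k : n) : ℂ →ₗ[ℝ] Matrix n n ℂ where
  toFun z := single j k z - single k j (star z)
  map_add' z w := by
    simp only [star_add, single_add]
    abel
  map_smul' r z := by
    simp only [star_smul, star_trivial, RingHom.id_apply, smul_sub, smul_single]

theorem skewSingle_apply (j k : n) (z : ℂ) :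
    skewSingle j k z = single j k z - single k j (star z) := rfl

theorem skewSingle_self (j : n) (z : ℂ) : skewSingle j j z = (2 * z.im) • single j j I := by
  rw [skewSingle_apply, sub_eq_add_neg, single_neg, ← single_add, ← sub_eq_add_neg, star_def,
    sub_conj, smul_single, real_smul]

theorem skewSingle_apply_of_star_eq_neg {M : Matrix n n ℂ} (hM : star M = -M) (j k : n) :
    skewSingle j k (M j k) = single j k (M j k) + single k j (M k j) := by
  have : star (M j k) = -M k j := by
    simpa using congrFun (congrFun hM k) j
  rw [skewSingle_apply, this, ← single_neg, sub_neg_eq_add]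

variable [Fintype n]

theorem sum_skewSingle_of_star_eq_neg {M : Matrix n n ℂ} (hM : star M = -M) :
    ∑ j, ∑ k, skewSingle j k (M j k) = (2 : ℝ) • M := by
  simp only [skewSingle_apply_of_star_eq_neg hM, Finset.sum_add_distrib]
  rw [Finset.sum_comm (f := fun j k => single k j (M k j)), ← matrix_eq_sum_single, two_smul]

theorem lie_single_I_lie_single_I {j k : n} (hjk : j ≠ k) (M : Matrix n n ℂ) :
    ⁅single j j I, ⁅single k k I, M⁆⁆ = single j k (M j k) + single k j (M k j) := by
  ext a b
  simp only [← diagonal_single, lie_diagonal_apply, add_apply, single_apply, Pi.single_apply]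
  grind [I_mul_I]

theorem lie_single_I_skewSingle {j k : n} (hjk : j ≠ k) (z : ℂ) :
    ⁅single j j I, skewSingle j k z⁆ = skewSingle j k (I * z) := by
  simp [skewSingle_apply, ← diagonal_single, lie_sub, lie_diagonal_single,
    Pi.single_eq_of_ne hjk.symm]

theorem lie_skewSingle_skewSingle {j k l : n} (hjk : j ≠ k) (hkl : k ≠ l) (hjl : j ≠ l) (z : ℂ) :
    ⁅skewSingle j k 1, skewSingle k l z⁆ = skewSingle j l z := by
  simp [skewSingle_apply, Ring.lie_def, sub_mul, mul_sub, hjk, hkl, hjl, hjk.symm, hkl.symm,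
    hjl.symm]

end Matrix

theorem SimpleGraph.Reachable.rel_of_ne {V : Type*} {G : SimpleGraph V} {r : V → V → Prop}
    (hadj : ∀ ⦃u v⦄, G.Adj u v → r u v)
    (htrans : ∀ ⦃u v w⦄, G.Adj u v → v ≠ w → u ≠ w → r v w → r u w)
    {u w : V} (h : G.Reachable u w) (huw : u ≠ w) : r u w := by
  obtain ⟨p⟩ := h
  induction p with
  | nil => exact absurd rfl huw
  | @cons u v w huv p ih =>
    obtain rfl | hvw := eq_or_ne v w
    · exact hadj huv
    · exact htrans huv hvw huw (ih hvw)

namespace LieSubalgebra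

variable {n : Type*} [Fintype n] [DecidableEq n] {L : LieSubalgebra ℝ (Matrix n n ℂ)}

theorem single_I_mem (hdiag : ∀ D : n → ℝ, I • diagonal (fun k => (D k : ℂ)) ∈ L) (j : n) :
    single j j I ∈ L := by
  convert hdiag (Pi.single j 1) using 1
  rw [← diagonal_single, ← diagonal_smul]
  congr 1
  ext k
  by_cases hk : k = j <;> simp [hk]

theorem skewSingle_self_mem (hdiag : ∀ D : n → ℝ, I • diagonal (fun k => (D k : ℂ)) ∈ L)
    (j : n) (z : ℂ) : skewSingle j j z ∈ L := by
  rw [skewSingle_self]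
  exact L.smul_mem _ (single_I_mem hdiag j)

theorem skewSingle_mem_of_ne_zero (hdiag : ∀ D : n → ℝ, I • diagonal (fun k => (D k : ℂ)) ∈ L)
    {j k : n} (hjk : j ≠ k) {c : ℂ} (hc : c ≠ 0) (h : skewSingle j k c ∈ L) (z : ℂ) :
    skewSingle j k z ∈ L := by
  have hIc : skewSingle j k (I * c) ∈ L :=
    lie_single_I_skewSingle hjk c ▸ L.lie_mem (single_I_mem hdiag j) h
  have hz : z = (z / c).re • c + (z / c).im • (I * c) := by
    calc z = (z / c) * c := (div_mul_cancel₀ z hc).symm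
      _ = _ := by
        conv_lhs => rw [← re_add_im (z / c)]
        simp only [real_smul]
        ring
  rw [hz, map_add, map_smul, map_smul]
  exact add_mem (L.smul_mem _ h) (L.smul_mem _ hIc)

theorem skewSingle_mem_of_mem_of_ne_zero
    (hdiag : ∀ D : n → ℝ, I • diagonal (fun k => (D k : ℂ)) ∈ L) {A : Matrix n n ℂ} (hA : A ∈ L)
    (hskew : star A = -A) {j k : n} (hjk : j ≠ k) (hAjk : A j k ≠ 0) (z : ℂ) :
    skewSingle j k z ∈ L := by
  refine skewSingle_mem_of_ne_zero hdiag hjk hAjk ?_ z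
  rw [skewSingle_apply_of_star_eq_neg hskew, ← lie_single_I_lie_single_I hjk]
  exact L.lie_mem (single_I_mem hdiag j) (L.lie_mem (single_I_mem hdiag k) hA)

theorem skewAdjoint_le_of_connected
    (hdiag : ∀ D : n → ℝ, I • diagonal (fun k => (D k : ℂ)) ∈ L) {A : Matrix n n ℂ} (hA : A ∈ L)
    (hskew : star A = -A) {G : SimpleGraph n} (hG : G.Connected)
    (hadj : ∀ ⦃j k⦄, G.Adj j k → A j k ≠ 0) :
    skewAdjoint ℝ (Matrix n n ℂ) ≤ L := by
  have hedge {j k : n} (hjk : G.Adj j k) (z : ℂ) : skewSingle j k z ∈ L :=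
    skewSingle_mem_of_mem_of_ne_zero hdiag hA hskew hjk.ne (hadj hjk) z
  have hoff {j k : n} (hjk : j ≠ k) (z : ℂ) : skewSingle j k z ∈ L :=
    (hG.preconnected j k).rel_of_ne (r := fun j k => ∀ z, skewSingle j k z ∈ L)
      (fun _ _ huv => hedge huv)
      (fun _ _ _ huv hvw huw hr z =>
        lie_skewSingle_skewSingle huv.ne hvw huw z ▸ L.lie_mem (hedge huv 1) (hr z)) hjk z
  intro M hM
  have hsum : ∑ j, ∑ k, skewSingle j k (M j k) ∈ L := by
    refine sum_mem fun j _ => sum_mem fun k _ => ?_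
    obtain rfl | hjk := eq_or_ne j k
    · exact skewSingle_self_mem hdiag j _
    · exact hoff hjk _
  have := L.smul_mem (2⁻¹ : ℝ) hsum
  rwa [sum_skewSingle_of_star_eq_neg (mem_skewAdjoint.mp hM), inv_smul_smul₀ two_ne_zero] at this

end LieSubalgebra

theorem stmt_3_general (d : ℕ) (H : Matrix (Fin d) (Fin d) ℂ)
    (hH : H.IsHermitian)
    (hconn : (SimpleGraph.fromRel (fun i j : Fin d => H i j ≠ 0)).Connected) :
    (LieSubalgebra.lieSpan ℝ (Matrix (Fin d) (Fin d) ℂ)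
        ({M : Matrix (Fin d) (Fin d) ℂ |
            ∃ D : Fin d → ℝ, M = Complex.I • Matrix.diagonal (fun k => (D k : ℂ))} ∪
          {Complex.I • H}) : Set (Matrix (Fin d) (Fin d) ℂ)) =
      {X : Matrix (Fin d) (Fin d) ℂ | X.conjTranspose = -X} := by
  have hIH : star (I • H) = -(I • H) := by
    rw [star_smul, star_def, conj_I, star_eq_conjTranspose, hH.eq, neg_smul]
  have hadj : ∀ ⦃j k⦄, (SimpleGraph.fromRel fun i j => H i j ≠ 0).Adj j k → (I • H) j k ≠ 0 := by
    rintro j k ⟨-, hjk | hkj⟩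
    · simpa using hjk
    · simpa [← hH.apply j k] using hkj
  change _ = ((LieSubalgebra.skewAdjoint ℝ (Matrix (Fin d) (Fin d) ℂ) : LieSubalgebra ℝ _) :
    Set (Matrix (Fin d) (Fin d) ℂ))
  rw [SetLike.coe_set_eq]
  refine le_antisymm (LieSubalgebra.lieSpan_le.mpr ?_) (LieSubalgebra.skewAdjoint_le_of_connected
    (fun D => LieSubalgebra.subset_lieSpan (Or.inl ⟨D, rfl⟩))
    (LieSubalgebra.subset_lieSpan (Or.inr rfl)) hIH hconn hadj)
  rintro _ (⟨D, rfl⟩ | rfl)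
  · simp [star_smul, star_eq_conjTranspose, diagonal_conjTranspose]
  · exact hIH

/-- Let `d ≥ 1` and let `H` be a Hermitian `d × d` complex matrix that is
path-connected (the simple graph with `i ~ j` iff `i ≠ j` and `H i j ≠ 0` is connected).
Regarding the `d × d` complex matrices as a Lie algebra over `ℝ` with the commutator bracket,
the real Lie subalgebra generated by `{i • D : D real diagonal}` together with `i • H` is
exactly the unitary Lie algebra `u(d)`, i.e. the set of skew-Hermitian matrices. -/
theorem stmt_3 (d : ℕ) (hd : 1 ≤ d) (H : Matrix (Fin d) (Fin d) ℂ)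
    (hH : H.IsHermitian)
    (hconn : (SimpleGraph.fromRel (fun i j : Fin d => H i j ≠ 0)).Connected) :
    (LieSubalgebra.lieSpan ℝ (Matrix (Fin d) (Fin d) ℂ)
        ({M : Matrix (Fin d) (Fin d) ℂ |
            ∃ D : Fin d → ℝ, M = Complex.I • Matrix.diagonal (fun k => (D k : ℂ))} ∪
          {Complex.I • H}) : Set (Matrix (Fin d) (Fin d) ℂ)) =
      {X : Matrix (Fin d) (Fin d) ℂ | X.conjTranspose = -X} :=
  stmt_3_general d H hH hconn
end

section
/- Let T and T' be standard Young tableaux of the same size n. If their tensor-product content vectors are equal, i.e., β^{(2)}_T(r,s) = β^{(2)}_{T'}(r,s) for all 1 ≤ r, s ≤ n, then T = T' (they have the same underlying Young diagram and the same filling). -/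
/-! **Statement 6.** If two standard Young tableaux of the same size `n` have equal
tensor-product content vectors (`β⁽²⁾_T(r,s) = β_T(r)·β_T(s)` for all `1 ≤ r, s ≤ n`),
then they are equal (same Young diagram and same filling). -/

/-- A standard Young tableau of size `n`: a Young diagram `shape` with `n` boxes together with
a filling `entry` of its boxes that is a bijection onto `{1, …, n}` and strictly increases
along every row (left to right) and every column (top to bottom).  Cells `(i, j)` are 0-based
with `i` the row index and `j` the column index; `entry` is `0` outside the diagram. -/
structure StandardYoungTableau (n : ℕ) where
  shape : YoungDiagram
  card_shape : shape.card = n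
  entry : ℕ → ℕ → ℕ
  bijOn : Set.BijOn (fun c : ℕ × ℕ => entry c.1 c.2) ↑shape.cells (Set.Icc 1 n)
  row_strict : ∀ i j1 j2 : ℕ, j1 < j2 → (i, j2) ∈ shape → entry i j1 < entry i j2
  col_strict : ∀ i1 i2 j : ℕ, i1 < i2 → (i2, j) ∈ shape → entry i1 j < entry i2 j
  zeros : ∀ i j : ℕ, (i, j) ∉ shape → entry i j = 0

/-- The content vector `α_T : for `1 ≤ m ≤ n`, `α_T(m) = c - r` where the (0-based) box of `T`
containing `m` is in row `r` and column `c`. -/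
def contentVec {n : ℕ} (T : StandardYoungTableau n) (m : ℕ) : ℤ :=
  ∑ c ∈ T.shape.cells, if T.entry c.1 c.2 = m then (c.2 : ℤ) - (c.1 : ℤ) else 0

/-- The shifted content vector `β_T(m) = α_T(m) + k`, where `k` is the number of rows of the
underlying Young diagram (the length of its first column). -/
def shiftedContentVec {n : ℕ} (T : StandardYoungTableau n) (m : ℕ) : ℤ :=
  contentVec T m + (T.shape.colLen 0 : ℤ)

/-- The tensor-product content vector `β⁽²⁾_T(r, s) = β_T(r) · β_T(s)`. -/
def tensorContentVec {n : ℕ} (T : StandardYoungTableau n) (r s : ℕ) : ℤ :=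
  shiftedContentVec T r * shiftedContentVec T s

/- ### Auxiliary lemmas -/

lemma syt_exists_cell {n : ℕ} (T : StandardYoungTableau n) {m : ℕ} (h1 : 1 ≤ m) (h2 : m ≤ n) :
    ∃ c : ℕ × ℕ, c ∈ T.shape.cells ∧ T.entry c.1 c.2 = m := by
  obtain ⟨c, hc, he⟩ := T.bijOn.surjOn (Set.mem_Icc.mpr ⟨h1, h2⟩)
  exact ⟨c, Finset.mem_coe.mp hc, he⟩

lemma syt_entry_mem {n : ℕ} (T : StandardYoungTableau n) {c : ℕ × ℕ} (hc : c ∈ T.shape.cells) :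
    1 ≤ T.entry c.1 c.2 ∧ T.entry c.1 c.2 ≤ n := by
  have := T.bijOn.mapsTo (Finset.mem_coe.mpr hc)
  simpa [Set.mem_Icc] using this

lemma syt_mem_shape {n : ℕ} (T : StandardYoungTableau n) {c : ℕ × ℕ} (hc : c ∈ T.shape.cells) :
    (c.1, c.2) ∈ T.shape := by
  simpa using (T.shape.mem_cells c).mp hc

lemma contentVec_eq {n : ℕ} (T : StandardYoungTableau n) {c : ℕ × ℕ} (hc : c ∈ T.shape.cells) :
    contentVec T (T.entry c.1 c.2) = (c.2 : ℤ) - c.1 := by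
  unfold contentVec
  rw [Finset.sum_eq_single_of_mem c hc]
  · simp
  · intro b hb hbc
    rw [if_neg]
    intro hbe
    exact hbc (T.bijOn.injOn (Finset.mem_coe.mpr hb) (Finset.mem_coe.mpr hc) hbe)

lemma one_le_shifted {n : ℕ} (T : StandardYoungTableau n) {m : ℕ} (h1 : 1 ≤ m) (h2 : m ≤ n) :
    1 ≤ shiftedContentVec T m := by
  obtain ⟨c, hc, he⟩ := syt_exists_cell T h1 h2
  have hcol : c.1 < T.shape.colLen 0 := by
    rw [← YoungDiagram.mem_iff_lt_colLen]
    exact T.shape.up_left_mem le_rfl (Nat.zero_le _) (syt_mem_shape T hc)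
  unfold shiftedContentVec
  rw [← he, contentVec_eq T hc]
  have : (c.1 : ℤ) < (T.shape.colLen 0 : ℤ) := by exact_mod_cast hcol
  omega

lemma contentVec_one {n : ℕ} (T : StandardYoungTableau n) (hn : 1 ≤ n) :
    contentVec T 1 = 0 := by
  obtain ⟨c, hc, he⟩ := syt_exists_cell T le_rfl hn
  have hcs := syt_mem_shape T hc
  have h1 : c.1 = 0 := by
    by_contra hne
    have hmem : (0, c.2) ∈ T.shape :=
      T.shape.up_left_mem (Nat.zero_le _) le_rfl hcs
    have hlt := T.col_strict 0 c.1 c.2 (Nat.pos_of_ne_zero hne) hcs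
    rw [he] at hlt
    have hge := (syt_entry_mem T ((T.shape.mem_cells _).mpr hmem)).1
    simp only at hge
    omega
  have h2 : c.2 = 0 := by
    by_contra hne
    have hmem : (c.1, 0) ∈ T.shape :=
      T.shape.up_left_mem le_rfl (Nat.zero_le _) hcs
    have hlt := T.row_strict c.1 0 c.2 (Nat.pos_of_ne_zero hne) hcs
    rw [he] at hlt
    have hge := (syt_entry_mem T ((T.shape.mem_cells _).mpr hmem)).1
    simp only at hge
    omega
  rw [← he, contentVec_eq T hc, h1, h2]
  simp

lemma key_aux {n : ℕ} (T T' : StandardYoungTableau n) (m : ℕ)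
    (IH : ∀ j, j < m → ∀ d d' : ℕ × ℕ, d ∈ T.shape.cells → d' ∈ T'.shape.cells →
      T.entry d.1 d.2 = j → T'.entry d'.1 d'.2 = j → d = d')
    (c c' : ℕ × ℕ) (hc : c ∈ T.shape.cells) (hc' : c' ∈ T'.shape.cells)
    (hec : T.entry c.1 c.2 = m) (hec' : T'.entry c'.1 c'.2 = m)
    (hcont : (c.2 : ℤ) - c.1 = (c'.2 : ℤ) - c'.1)
    (hlt : c.1 < c'.1) : False := by
  have hc2 : c.2 < c'.2 := by omega
  have hcs' := syt_mem_shape T' hc'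
  have hd' : (c'.1, c.2) ∈ T'.shape :=
    T'.shape.up_left_mem le_rfl (le_of_lt hc2) hcs'
  have hd'c : ((c'.1, c.2) : ℕ × ℕ) ∈ T'.shape.cells := (T'.shape.mem_cells _).mpr hd'
  set j := T'.entry c'.1 c.2 with hjdef
  have hjm : j < m := by
    have := T'.row_strict c'.1 c.2 c'.2 hc2 hcs'
    rw [hec'] at this
    exact this
  have hj1 := syt_entry_mem T' hd'c
  obtain ⟨e, he, hee⟩ := syt_exists_cell T hj1.1 hj1.2
  have heq : e = (c'.1, c.2) := IH j hjm e (c'.1, c.2) he hd'c hee rfl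
  rw [heq] at he hee
  have hmem : (c'.1, c.2) ∈ T.shape := syt_mem_shape T he
  have hee' : T.entry c'.1 c.2 = j := hee
  have hlt2 := T.col_strict c.1 c'.1 c.2 hlt hmem
  rw [hec, hee'] at hlt2
  omega

lemma key {n : ℕ} (T T' : StandardYoungTableau n)
    (hcont : ∀ j, 1 ≤ j → j ≤ n → contentVec T j = contentVec T' j) :
    ∀ m (c c' : ℕ × ℕ), c ∈ T.shape.cells → c' ∈ T'.shape.cells →
      T.entry c.1 c.2 = m → T'.entry c'.1 c'.2 = m → c = c' := by
  intro m
  induction m using Nat.strong_induction_on with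
  | _ m IH =>
    intro c c' hc hc' hec hec'
    have hm : 1 ≤ m ∧ m ≤ n := hec ▸ syt_entry_mem T hc
    have h1 : contentVec T m = (c.2 : ℤ) - c.1 := hec ▸ contentVec_eq T hc
    have h2 : contentVec T' m = (c'.2 : ℤ) - c'.1 := hec' ▸ contentVec_eq T' hc'
    have hcc : (c.2 : ℤ) - c.1 = (c'.2 : ℤ) - c'.1 := by
      rw [← h1, ← h2, hcont m hm.1 hm.2]
    rcases lt_trichotomy c.1 c'.1 with hl | hl | hl
    · exact absurd (key_aux T T' m IH c c' hc hc' hec hec' hcc hl) id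
    · have h3 : c.2 = c'.2 := by omega
      exact Prod.ext hl h3
    · have IH' : ∀ j, j < m → ∀ d d' : ℕ × ℕ, d ∈ T'.shape.cells → d ∈ T'.shape.cells →
        True := fun _ _ _ _ _ _ => trivial
      exact absurd (key_aux T' T m
        (fun j hj d d' h1 h2 h3 h4 => (IH j hj d' d h2 h1 h4 h3).symm)
        c' c hc' hc hec' hec hcc.symm hl) id

lemma syt_ext {n : ℕ} {T T' : StandardYoungTableau n}
    (h1 : T.shape = T'.shape) (h2 : T.entry = T'.entry) : T = T' := by
  cases T; cases T'
  cases h1; cases h2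
  rfl

theorem stmt_6 {n : ℕ} (T T' : StandardYoungTableau n)
    (h : ∀ r s : ℕ, 1 ≤ r → r ≤ n → 1 ≤ s → s ≤ n →
      tensorContentVec T r s = tensorContentVec T' r s) :
    T = T' := by
  -- Step 1: shifted content vectors agree.
  have hβ : ∀ m, 1 ≤ m → m ≤ n → shiftedContentVec T m = shiftedContentVec T' m := by
    intro m h1 h2
    have hsq := h m m h1 h2 h1 h2
    unfold tensorContentVec at hsq
    have p1 := one_le_shifted T h1 h2
    have p2 := one_le_shifted T' h1 h2
    rcases mul_self_eq_mul_self_iff.mp hsq with heq | heq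
    · exact heq
    · omega
  -- Step 2: content vectors agree (the shifts agree, via the cell of 1).
  have hcont : ∀ j, 1 ≤ j → j ≤ n → contentVec T j = contentVec T' j := by
    intro j h1 h2
    have hn : 1 ≤ n := le_trans h1 h2
    have hk := hβ 1 le_rfl hn
    unfold shiftedContentVec at hk
    rw [contentVec_one T hn, contentVec_one T' hn] at hk
    have := hβ j h1 h2
    unfold shiftedContentVec at this
    omega
  have hkey := key T T' hcont
  have hkey' := key T' T (fun j hj1 hj2 => (hcont j hj1 hj2).symm)
  -- Step 3: shapes agree.
  have hshape : T.shape = T'.shape := by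
    ext c
    constructor
    · intro hc
      have hcc : c ∈ T.shape.cells := (T.shape.mem_cells c).mpr hc
      have hm := syt_entry_mem T hcc
      obtain ⟨c', hc', he'⟩ := syt_exists_cell T' hm.1 hm.2
      have : c = c' := hkey _ c c' hcc hc' rfl he'
      rw [this]
      exact (T'.shape.mem_cells c').mp hc'
    · intro hc
      have hcc : c ∈ T'.shape.cells := (T'.shape.mem_cells c).mpr hc
      have hm := syt_entry_mem T' hcc
      obtain ⟨c', hc', he'⟩ := syt_exists_cell T hm.1 hm.2
      have : c = c' := hkey' _ c c' hcc hc' rfl he'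
      rw [this]
      exact (T.shape.mem_cells c').mp hc'
  -- Step 4: entries agree.
  have hentry : T.entry = T'.entry := by
    funext i j
    by_cases hij : (i, j) ∈ T.shape
    · have hcc : ((i, j) : ℕ × ℕ) ∈ T.shape.cells := (T.shape.mem_cells _).mpr hij
      have hm := syt_entry_mem T hcc
      obtain ⟨c', hc', he'⟩ := syt_exists_cell T' hm.1 hm.2
      have heq : ((i, j) : ℕ × ℕ) = c' := hkey _ (i, j) c' hcc hc' rfl he'
      rw [← heq] at he'
      exact he'.symm
    · have hij' : (i, j) ∉ T'.shape := hshape ▸ hij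
      rw [T.zeros i j hij, T'.zeros i j hij']
  exact syt_ext hshape hentry
end

section
/- Work on the n-qubit space (ℂ²)^{⊗n}, realized as 2^n × 2^n complex matrices indexed by functions f, g : {1,…,n} → {0,1}. For 1 ≤ k ≤ n define the sequentially coupled Casimir operator J_k² = (Σ_{i=1}^k S^x_i)² + (Σ_{i=1}^k S^y_i)² + (Σ_{i=1}^k S^z_i)², and for 1 ≤ m ≤ n define the YJM operator X̂_m = Σ_{i=1}^{m−1} U_{(i,m)} (with X̂_1 = 0). Then J_k² and X̂_m commute: J_k² X̂_m = X̂_m J_k² for all 1 ≤ k, m ≤ n. -/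
/-! **Statement 9.** On the `n`-qubit space (matrices indexed by functions `Fin n → Fin 2`),
the sequentially coupled Casimir operators
`J_k² = (Σ_{i=1}^k S^x_i)² + (Σ_{i=1}^k S^y_i)² + (Σ_{i=1}^k S^z_i)²` commute with the
YJM operators `X̂_m = Σ_{i=1}^{m−1} U_{(i,m)}` (with `X̂_1 = 0`). -/

/-- The permutation operator `U_σ` on the `n`-qubit space:
`(U_σ)_{f,g} = 1` iff `f (σ i) = g i` for all `i`. -/
noncomputable def permOp (n : ℕ) (σ : Equiv.Perm (Fin n)) :
    Matrix (Fin n → Fin 2) (Fin n → Fin 2) ℂ :=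
  Matrix.of fun f g => if ∀ i : Fin n, f (σ i) = g i then 1 else 0

/-- The one-site operator acting as the `2 × 2` matrix `M` on the `i`-th tensor factor and as
the identity on all other factors. -/
noncomputable def oneSiteOp (n : ℕ) (M : Matrix (Fin 2) (Fin 2) ℂ) (i : Fin n) :
    Matrix (Fin n → Fin 2) (Fin n → Fin 2) ℂ :=
  Matrix.of fun f g => if ∀ j : Fin n, j ≠ i → f j = g j then M (f i) (g i) else 0

/-- The spin operator `S^x_i`: half the Pauli matrix `σ^x` acting on the `i`-th qubit. -/
noncomputable def SpinX (n : ℕ) (i : Fin n) : Matrix (Fin n → Fin 2) (Fin n → Fin 2) ℂ :=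
  oneSiteOp n ((1 / 2 : ℂ) • !![0, 1; 1, 0]) i

/-- The spin operator `S^y_i`: half the Pauli matrix `σ^y` acting on the `i`-th qubit. -/
noncomputable def SpinY (n : ℕ) (i : Fin n) : Matrix (Fin n → Fin 2) (Fin n → Fin 2) ℂ :=
  oneSiteOp n ((1 / 2 : ℂ) • !![0, -Complex.I; Complex.I, 0]) i

/-- The spin operator `S^z_i`: half the Pauli matrix `σ^z` acting on the `i`-th qubit. -/
noncomputable def SpinZ (n : ℕ) (i : Fin n) : Matrix (Fin n → Fin 2) (Fin n → Fin 2) ℂ :=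
  oneSiteOp n ((1 / 2 : ℂ) • !![1, 0; 0, -1]) i

/-- The sequentially coupled Casimir operator
`J_k² = (Σ_{i=1}^k S^x_i)² + (Σ_{i=1}^k S^y_i)² + (Σ_{i=1}^k S^z_i)²`
(1-based site labels; site `i : Fin n` has label `i + 1`). -/
noncomputable def casimirOp (n k : ℕ) : Matrix (Fin n → Fin 2) (Fin n → Fin 2) ℂ :=
  (∑ i : Fin n, if (i : ℕ) + 1 ≤ k then SpinX n i else 0) ^ 2 +
    (∑ i : Fin n, if (i : ℕ) + 1 ≤ k then SpinY n i else 0) ^ 2 +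
    (∑ i : Fin n, if (i : ℕ) + 1 ≤ k then SpinZ n i else 0) ^ 2

/-- The YJM operator `X̂_m = Σ_{i=1}^{m−1} U_{(i,m)}` (1-based labels; `X̂_1 = 0`). -/
noncomputable def yjmOp (n m : ℕ) : Matrix (Fin n → Fin 2) (Fin n → Fin 2) ℂ :=
  ∑ i : Fin n, ∑ j : Fin n,
    if (i : ℕ) + 1 < m ∧ (j : ℕ) + 1 = m then permOp n (Equiv.swap i j) else 0

/-
Dirac's identity `S_i · S_j = ½ U_{(i j)} − ¼` for `i ≠ j` (with `S_i · S_i = ¾`) turns `J_k²`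
into a scalar plus `½ T_k`, where `T_k` is the sum of `U_{(i j)}` over ordered pairs of distinct
sites `i, j ≤ k`. Conjugating by a site permutation that preserves `{1, …, k}` fixes `T_k`, so the
`T_k` commute pairwise, and `X̂_m = ½ (T_m − T_{m−1})`.
-/

open Equiv Finset

section
variable {α β : Type*} {f g : α → β}

lemma eq_iff_forall_ne_and (i : α) : f = g ↔ (∀ l, l ≠ i → f l = g l) ∧ f i = g i := by
  rw [funext_iff]; grind

lemma eq_iff_forall_ne_ne_and (i j : α) :
    f = g ↔ (∀ l, l ≠ i → l ≠ j → f l = g l) ∧ f i = g i ∧ f j = g j := by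
  refine ⟨by rintro rfl; simp, fun ⟨h, hi, hj⟩ => funext fun l => ?_⟩
  rcases eq_or_ne l i with rfl | hli
  · exact hi
  rcases eq_or_ne l j with rfl | hlj
  · exact hj
  · exact h l hli hlj

variable [DecidableEq α]

lemma forall_swap_apply_eq_iff (i j : α) : (∀ l, f (swap i j l) = g l) ↔
    (∀ l, l ≠ i → l ≠ j → f l = g l) ∧ f j = g i ∧ f i = g j := by
  grind

lemma forall_ne_update_eq_iff {i j : α} (hij : i ≠ j) (v : β) :
    (∀ l, l ≠ j → Function.update f i v l = g l) ↔
      v = g i ∧ ∀ l, l ≠ i → l ≠ j → f l = g l := by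
  grind [Function.update_apply]

lemma swap_apply_mem_iff {s : Finset α} {a b : α} (ha : a ∈ s) (hb : b ∈ s) (x : α) :
    swap a b x ∈ s ↔ x ∈ s := by
  rw [swap_apply_def]
  split_ifs with h₁ h₂ <;> simp_all

lemma sum_eq_sum_update {M : Type*} [AddCommMonoid M] [Fintype α] [Fintype β]
    (f : α → β) (i : α) (F : (α → β) → M) (hF : ∀ h, ¬ (∀ l, l ≠ i → f l = h l) → F h = 0) :
    ∑ h, F h = ∑ v, F (Function.update f i v) := by
  classical
  rw [← sum_image (f := F) (g := Function.update f i) fun a _ b _ hab => by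
    simpa using congrFun hab i]
  refine (sum_subset (subset_univ _) fun h _ hh => hF h fun hc => hh ?_).symm
  refine mem_image.2 ⟨h i, mem_univ _, funext fun l => ?_⟩
  rcases eq_or_ne l i with rfl | hl
  · simp
  · simp [Function.update_of_ne hl, hc l hl]

end

variable {n : ℕ}

lemma permOp_mul (σ τ : Perm (Fin n)) : permOp n σ * permOp n τ = permOp n (σ * τ) := by
  ext f g
  rw [Matrix.mul_apply, sum_eq_single (f ∘ σ)]
  · simp only [permOp, Matrix.of_apply, Function.comp_apply, Perm.mul_apply, implies_true,
      if_true, one_mul]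
    congr
  · intro h _ hne
    have : ¬ ∀ i, f (σ i) = h i := fun hc => hne (funext fun i => (hc i).symm)
    simp [permOp, this]
  · simp

/-- Twice the class sum of the transpositions of the firstSites in `s`. -/
noncomputable def transpositionSum (s : Finset (Fin n)) :
    Matrix (Fin n → Fin 2) (Fin n → Fin 2) ℂ :=
  ∑ p ∈ s.offDiag, permOp n (swap p.1 p.2)

lemma commute_permOp_transpositionSum {t : Finset (Fin n)} (σ : Perm (Fin n))
    (hσ : ∀ x, σ x ∈ t ↔ x ∈ t) : Commute (permOp n σ) (transpositionSum t) := by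
  have conj : ∀ p : Fin n × Fin n, permOp n σ * permOp n (swap p.1 p.2) =
      permOp n (swap (σ p.1) (σ p.2)) * permOp n σ := fun _ => by
    rw [permOp_mul, permOp_mul, mul_swap_eq_swap_mul]
  simp only [Commute, SemiconjBy, transpositionSum, mul_sum, sum_mul, conj]
  exact sum_equiv (σ.prodCongr σ) (by simp [hσ, σ.injective.ne_iff]) (fun _ _ => rfl)

lemma commute_transpositionSum_of_subset {s t : Finset (Fin n)} (hst : s ⊆ t) :
    Commute (transpositionSum s) (transpositionSum t) :=
  Commute.sum_left _ _ _ fun _ hp => commute_permOp_transpositionSum _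
    (swap_apply_mem_iff (hst (mem_offDiag.1 hp).1) (hst (mem_offDiag.1 hp).2.1))

lemma transpositionSum_insert {s : Finset (Fin n)} {a : Fin n} (ha : a ∉ s) :
    transpositionSum (insert a s) =
      transpositionSum s + 2 • ∑ i ∈ s, permOp n (swap i a) := by
  rw [transpositionSum, offDiag_insert ha, sum_union, sum_union, singleton_product,
    product_singleton, sum_map, sum_map]
  · simp [transpositionSum, swap_comm, two_mul, add_assoc]
  all_goals rw [disjoint_left]; aesop

lemma oneSiteOp_mul_self (M N : Matrix (Fin 2) (Fin 2) ℂ) (i : Fin n) :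
    oneSiteOp n M i * oneSiteOp n N i = oneSiteOp n (M * N) i := by
  ext f g
  rw [Matrix.mul_apply, sum_eq_sum_update f i _ fun h hc => by simp [oneSiteOp, hc]]
  simp +contextual [oneSiteOp, Matrix.mul_apply, Fin.sum_univ_two]

lemma oneSiteOp_mul_of_ne (M N : Matrix (Fin 2) (Fin 2) ℂ) {i j : Fin n} (hij : i ≠ j) :
    oneSiteOp n M i * oneSiteOp n N j = Matrix.of fun f g =>
      if ∀ l, l ≠ i → l ≠ j → f l = g l then M (f i) (g i) * N (f j) (g j) else 0 := by
  ext f g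
  rw [Matrix.mul_apply, sum_eq_sum_update f i _ fun h hc => by simp [oneSiteOp, hc]]
  simp +contextual [oneSiteOp, forall_ne_update_eq_iff hij, Function.update_of_ne hij.symm,
    ite_and]

lemma oneSiteOp_add (M N : Matrix (Fin 2) (Fin 2) ℂ) (i : Fin n) :
    oneSiteOp n M i + oneSiteOp n N i = oneSiteOp n (M + N) i := by
  ext f g
  simp only [oneSiteOp, Matrix.add_apply, Matrix.of_apply]
  split_ifs <;> simp

lemma oneSiteOp_smul (c : ℂ) (M : Matrix (Fin 2) (Fin 2) ℂ) (i : Fin n) :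
    oneSiteOp n (c • M) i = c • oneSiteOp n M i := by
  ext f g
  simp only [oneSiteOp, Matrix.smul_apply, Matrix.of_apply]
  split_ifs <;> simp

lemma oneSiteOp_one (i : Fin n) : oneSiteOp n 1 i = 1 := by
  ext f g
  simp [oneSiteOp, Matrix.one_apply, eq_iff_forall_ne_and i, ite_and]

lemma pauli_contraction (a b c d : Fin 2) :
    ((1 / 2 : ℂ) • !![0, 1; 1, 0]) a b * ((1 / 2 : ℂ) • !![0, 1; 1, 0]) c d +
      ((1 / 2 : ℂ) • !![0, -Complex.I; Complex.I, 0]) a b *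
        ((1 / 2 : ℂ) • !![0, -Complex.I; Complex.I, 0]) c d +
      ((1 / 2 : ℂ) • !![1, 0; 0, -1]) a b * ((1 / 2 : ℂ) • !![1, 0; 0, -1]) c d =
      (1 / 2 : ℂ) * (if c = b ∧ a = d then 1 else 0) -
        (1 / 4 : ℂ) * (if a = b ∧ c = d then 1 else 0) := by
  fin_cases a <;> fin_cases b <;> fin_cases c <;> fin_cases d <;>
    norm_num [Fin.ext_iff] <;> ring_nf <;> simp [Complex.I_sq] <;> ring

noncomputable def spinDot (n : ℕ) (i j : Fin n) :
    Matrix (Fin n → Fin 2) (Fin n → Fin 2) ℂ :=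
  SpinX n i * SpinX n j + SpinY n i * SpinY n j + SpinZ n i * SpinZ n j

lemma spinDot_self (i : Fin n) : spinDot n i i = (3 / 4 : ℂ) • 1 := by
  have pauli_sq : ((1 / 2 : ℂ) • !![0, 1; 1, 0]) * ((1 / 2 : ℂ) • !![0, 1; 1, 0]) +
      ((1 / 2 : ℂ) • !![0, -Complex.I; Complex.I, 0]) *
        ((1 / 2 : ℂ) • !![0, -Complex.I; Complex.I, 0]) +
      ((1 / 2 : ℂ) • !![1, 0; 0, -1]) * ((1 / 2 : ℂ) • !![1, 0; 0, -1]) =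
      (3 / 4 : ℂ) • (1 : Matrix (Fin 2) (Fin 2) ℂ) := by
    ext a b
    fin_cases a <;> fin_cases b <;>
      simp <;> ring_nf <;> simp [Complex.I_sq] <;> norm_num
  rw [spinDot, SpinX, SpinY, SpinZ, oneSiteOp_mul_self, oneSiteOp_mul_self, oneSiteOp_mul_self,
    oneSiteOp_add, oneSiteOp_add, pauli_sq, oneSiteOp_smul, oneSiteOp_one]

lemma spinDot_of_ne {i j : Fin n} (hij : i ≠ j) :
    spinDot n i j = (1 / 2 : ℂ) • permOp n (swap i j) - (1 / 4 : ℂ) • 1 := by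
  ext f g
  rw [Matrix.sub_apply, Matrix.smul_apply, Matrix.smul_apply]
  simp only [spinDot, SpinX, SpinY, SpinZ, oneSiteOp_mul_of_ne _ _ hij, Matrix.add_apply,
    Matrix.of_apply, Matrix.one_apply, permOp, forall_swap_apply_eq_iff,
    eq_iff_forall_ne_ne_and i j, smul_eq_mul]
  by_cases hC : ∀ l, l ≠ i → l ≠ j → f l = g l
  · simp only [eq_true hC, true_and, if_true]
    exact pauli_contraction _ _ _ _
  · simp [hC]

lemma totalSpin_sq_eq (s : Finset (Fin n)) :
    (∑ i ∈ s, SpinX n i) ^ 2 + (∑ i ∈ s, SpinY n i) ^ 2 + (∑ i ∈ s, SpinZ n i) ^ 2 =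
      ((3 / 4 : ℂ) * #s - (1 / 4 : ℂ) * #s.offDiag) • 1 +
        (1 / 2 : ℂ) • transpositionSum s := by
  have hdiag : ∑ p ∈ s.diag, spinDot n p.1 p.2 = ∑ p ∈ s.diag, (3 / 4 : ℂ) • 1 :=
    sum_congr rfl fun p hp => by rw [(mem_diag.1 hp).2, spinDot_self]
  have hoff : ∑ p ∈ s.offDiag, spinDot n p.1 p.2 =
      ∑ p ∈ s.offDiag, ((1 / 2 : ℂ) • permOp n (swap p.1 p.2) - (1 / 4 : ℂ) • 1) :=
    sum_congr rfl fun p hp => spinDot_of_ne (mem_offDiag.1 hp).2.2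
  calc _ = ∑ p ∈ s ×ˢ s, spinDot n p.1 p.2 := by
        simp only [sq, sum_mul_sum, ← sum_add_distrib, sum_product, spinDot]
    _ = _ := by
        rw [← diag_union_offDiag, sum_union (disjoint_diag_offDiag s), hdiag, hoff,
          sum_sub_distrib, sum_const, sum_const, diag_card, ← smul_sum, transpositionSum]
        module

def firstSites (n k : ℕ) : Finset (Fin n) := univ.filter fun i => (i : ℕ) + 1 ≤ k

lemma firstSites_mono {k l : ℕ} (hkl : k ≤ l) : firstSites n k ⊆ firstSites n l := by
  intro i hi
  simp only [firstSites, mem_filter, mem_univ, true_and] at hi ⊢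
  omega

lemma casimirOp_eq (k : ℕ) : casimirOp n k =
    ((3 / 4 : ℂ) * #(firstSites n k) - (1 / 4 : ℂ) * #(firstSites n k).offDiag) • 1 +
      (1 / 2 : ℂ) • transpositionSum (firstSites n k) := by
  rw [← totalSpin_sq_eq, casimirOp]
  simp only [firstSites, sum_filter]

lemma yjmOp_eq (m : ℕ) :
    yjmOp n m = (1 / 2 : ℂ) •
      (transpositionSum (firstSites n m) - transpositionSum (firstSites n (m - 1))) := by
  rcases m with _ | k
  · simp [yjmOp]
  by_cases hk : k < n
  · set a : Fin n := ⟨k, hk⟩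
    have hins : firstSites n (k + 1) = insert a (firstSites n k) := by
      ext i
      simp only [firstSites, mem_filter, mem_univ, true_and, mem_insert, Fin.ext_iff, a]
      omega
    have ha : a ∉ firstSites n k := by simp [firstSites, a]
    have hX : yjmOp n (k + 1) = ∑ i ∈ firstSites n k, permOp n (swap i a) := by
      rw [yjmOp, firstSites, sum_filter]
      refine sum_congr rfl fun i _ => ?_
      rw [sum_eq_single a]
      · simp [a]
      · exact fun b _ hb => if_neg fun h => hb (Fin.ext (by simp only [a]; omega))
      · simp
    rw [Nat.add_sub_cancel, hins, transpositionSum_insert ha, hX]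
    module
  · have hX : yjmOp n (k + 1) = 0 := by
      refine sum_eq_zero fun i _ => sum_eq_zero fun j _ => if_neg fun h => ?_
      have := j.isLt
      omega
    have hfirstSites : firstSites n (k + 1) = firstSites n k := by
      ext i
      simp only [firstSites, mem_filter, mem_univ, true_and]
      omega
    simp [hX, hfirstSites]

theorem stmt_9_general (n k m : ℕ) :
    casimirOp n k * yjmOp n m = yjmOp n m * casimirOp n k := by
  have hT : ∀ l,
      Commute (transpositionSum (firstSites n k)) (transpositionSum (firstSites n l)) := by
    intro l
    rcases le_total k l with h | h
    · exact commute_transpositionSum_of_subset (firstSites_mono h)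
    · exact (commute_transpositionSum_of_subset (firstSites_mono h)).symm
  have hX : Commute (transpositionSum (firstSites n k)) (yjmOp n m) := by
    rw [yjmOp_eq]
    exact ((hT m).sub_right (hT (m - 1))).smul_right _
  rw [casimirOp_eq]
  exact (((Commute.one_left _).smul_left _).add_left (hX.smul_left _)).eq

theorem stmt_9 (n k m : ℕ) (hk1 : 1 ≤ k) (hkn : k ≤ n) (hm1 : 1 ≤ m) (hmn : m ≤ n) :
    casimirOp n k * yjmOp n m = yjmOp n m * casimirOp n k :=
  stmt_9_general n k m
end

section
/- Let n = κ + 2m with κ, m ≥ 0, and work on the n-qubit space realized as vectors v : ({1,…,n} → {0,1}) → ℂ. Define the initial state Ψ_init = |0⟩^{⊗κ} ⊗ |s⟩^{⊗m}, i.e., Ψ_init(f) = [f(i) = 0 for all 1 ≤ i ≤ κ] · Π_{j=0}^{m−1} s(f(κ+2j+1), f(κ+2j+2)), where s(0,1) = 1/√2, s(1,0) = −1/√2 and s(0,0) = s(1,1) = 0. Then Ψ_init is a nonzero highest-weight vector of z-spin κ/2: the total raising operator annihilates it, J_+ Ψ_init = 0 where J_+ = Σ_{i=1}^n (S^x_i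 + i·S^y_i), and the total z-spin operator satisfies (Σ_{i=1}^n S^z_i) Ψ_init = (κ/2)·Ψ_init. -/
/-- The singlet amplitude: `s(0,1) = 1/√2`, `s(1,0) = −1/√2`, `s(0,0) = s(1,1) = 0`. -/
noncomputable def singletAmp (a b : Fin 2) : ℂ :=
  if a = 0 ∧ b = 1 then ((1 / Real.sqrt 2 : ℝ) : ℂ)
  else if a = 1 ∧ b = 0 then ((-(1 / Real.sqrt 2) : ℝ) : ℂ)
  else 0

/-- The initial state `Ψ_init = |0⟩^{⊗κ} ⊗ |s⟩^{⊗m}` on `n = κ + 2m` qubits: its amplitude at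
`f : Fin (κ + 2m) → Fin 2` is `[f i = 0 for the first κ sites] · Π_{j<m} s(f(κ+2j), f(κ+2j+1))`
(0-based sites; 1-based sites `κ+2j+1, κ+2j+2`). -/
noncomputable def psiInit (κ m : ℕ) : (Fin (κ + 2 * m) → Fin 2) → ℂ :=
  fun f =>
    (if ∀ i : Fin (κ + 2 * m), (i : ℕ) < κ → f i = 0 then 1 else 0) *
      ∏ j : Fin m,
        singletAmp (f ⟨κ + 2 * (j : ℕ), by have := j.isLt; omega⟩)
          (f ⟨κ + 2 * (j : ℕ) + 1, by have := j.isLt; omega⟩)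

/-! ### Auxiliary lemmas -/

lemma aux_sum_mulVec {ι X : Type*} [Fintype X] [DecidableEq X] (s : Finset ι)
    (A : ι → Matrix X X ℂ) (v : X → ℂ) :
    (∑ i ∈ s, A i).mulVec v = ∑ i ∈ s, (A i).mulVec v := by
  ext f
  simp [Matrix.mulVec, dotProduct, Finset.sum_apply, Matrix.sum_apply, Finset.sum_mul]
  rw [Finset.sum_comm]

lemma oneSiteOp_mulVec (n : ℕ) (M : Matrix (Fin 2) (Fin 2) ℂ) (i : Fin n)
    (v : (Fin n → Fin 2) → ℂ) (f : Fin n → Fin 2) :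
    (oneSiteOp n M i).mulVec v f = ∑ b : Fin 2, M (f i) b * v (Function.update f i b) := by
  classical
  have hinj : Function.Injective (Function.update f i) := fun a b h => by
    have := congrFun h i; simpa using this
  rw [Matrix.mulVec, dotProduct]
  rw [show (Finset.univ : Finset (Fin n → Fin 2)) =
    (Finset.univ.image (Function.update f i)) ∪
      (Finset.univ \ Finset.univ.image (Function.update f i)) by
      simp [Finset.union_sdiff_of_subset]]
  rw [Finset.sum_union (Finset.disjoint_sdiff)]
  rw [Finset.sum_image (fun a _ b _ h => hinj h)]
  have h0 : ∀ g ∈ Finset.univ \ Finset.univ.image (Function.update f i),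
      oneSiteOp n M i f g * v g = 0 := by
    intro g hg
    simp only [Finset.mem_sdiff, Finset.mem_image, Finset.mem_univ, true_and] at hg
    have : ¬ ∀ j : Fin n, j ≠ i → f j = g j := by
      intro h
      refine hg ⟨g i, funext fun j => ?_⟩
      by_cases hj : j = i
      · subst hj; simp [Function.update]
      · simp [Function.update, hj, (h j hj).symm]
    simp [oneSiteOp, this]
  rw [Finset.sum_eq_zero h0, add_zero]
  refine Finset.sum_congr rfl fun b _ => ?_
  have hcond : ∀ j : Fin n, j ≠ i → f j = Function.update f i b j := by
    intro j hj; simp [Function.update, hj]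
  show (if ∀ j : Fin n, j ≠ i → f j = Function.update f i b j
      then M (f i) (Function.update f i b i) else 0) * v _ = _
  rw [if_pos hcond, Function.update_self]

lemma sum_sites (κ m : ℕ) (T : Fin (κ + 2 * m) → ℂ) :
    ∑ i, T i = (∑ i : Fin κ, T ⟨i, by omega⟩) +
      ∑ j : Fin m, (T ⟨κ + 2 * j, by omega⟩ + T ⟨κ + 2 * j + 1, by omega⟩) := by
  classical
  have hbij : Function.Bijective (fun x : Fin κ ⊕ Fin m × Fin 2 =>
      (match x with
        | .inl i => (⟨i, by omega⟩ : Fin (κ + 2 * m))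
        | .inr (j, b) => ⟨κ + 2 * j + b, by have := j.isLt; have := b.isLt; omega⟩)) := by
    rw [Fintype.bijective_iff_injective_and_card]
    constructor
    · rintro (i | ⟨j, b⟩) (i' | ⟨j', b'⟩) h <;>
        simp only [Fin.mk.injEq] at h
      · exact congrArg Sum.inl (Fin.ext h)
      · exact absurd h (by have := i.isLt; have := b'.isLt; omega)
      · exact absurd h (by have := i'.isLt; have := b.isLt; omega)
      · have hb := b.isLt; have hb' := b'.isLt
        have : (j : ℕ) = j' ∧ (b : ℕ) = b' := by omega
        exact congrArg Sum.inr (Prod.ext (Fin.ext this.1) (Fin.ext this.2))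
    · simp [Fintype.card_sum, Fintype.card_prod]; ring
  rw [← Fintype.sum_bijective _ hbij _ T (fun _ => rfl)]
  rw [Fintype.sum_sum_type, Fintype.sum_prod_type]
  simp [Fin.sum_univ_two]

lemma raise_eq (n : ℕ) (i : Fin n) :
    SpinX n i + Complex.I • SpinY n i = oneSiteOp n !![0, 1; 0, 0] i := by
  ext f g
  simp only [SpinX, SpinY, oneSiteOp, Matrix.add_apply, Matrix.smul_apply, Matrix.of_apply]
  split_ifs with h
  · have key : ∀ a b : Fin 2,
        ((1 / 2 : ℂ) • !![0, 1; 1, 0]) a b +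
          Complex.I • ((1 / 2 : ℂ) • !![0, -Complex.I; Complex.I, 0]) a b
          = !![(0 : ℂ), 1; 0, 0] a b := by
      intro a b
      fin_cases a <;> fin_cases b <;>
        simp [Matrix.smul_apply, smul_eq_mul, Complex.I_mul_I] <;> ring_nf <;>
        simp [Complex.I_sq] <;> ring
    exact key (f i) (g i)
  · simp

/-- pointwise action of the raising operator at one site. -/
lemma raise_mulVec (n : ℕ) (i : Fin n) (v : (Fin n → Fin 2) → ℂ) (f : Fin n → Fin 2) :
    (SpinX n i + Complex.I • SpinY n i).mulVec v f =
      if f i = 0 then v (Function.update f i 1) else 0 := by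
  rw [raise_eq, oneSiteOp_mulVec, Fin.sum_univ_two]
  have : f i = 0 ∨ f i = 1 := by omega
  rcases this with h | h <;> simp [h]

lemma spinZ_mulVec (n : ℕ) (i : Fin n) (v : (Fin n → Fin 2) → ℂ) (f : Fin n → Fin 2) :
    (SpinZ n i).mulVec v f = (if f i = 0 then (1/2 : ℂ) else -(1/2)) * v f := by
  rw [SpinZ, oneSiteOp_mulVec, Fin.sum_univ_two]
  have : f i = 0 ∨ f i = 1 := by omega
  rcases this with h | h
  · have hu : Function.update f i 0 = f := by rw [← h]; exact Function.update_eq_self i f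
    rw [h, hu]
    norm_num [Matrix.smul_apply, smul_eq_mul]
  · have hu : Function.update f i 1 = f := by rw [← h]; exact Function.update_eq_self i f
    rw [h, hu]
    norm_num [Matrix.smul_apply, smul_eq_mul, show (1 : Fin 2) ≠ 0 by decide]

/-- the indicator factor of `psiInit` -/
noncomputable def indC (κ m : ℕ) (f : Fin (κ + 2 * m) → Fin 2) : ℂ :=
  if ∀ i : Fin (κ + 2 * m), (i : ℕ) < κ → f i = 0 then 1 else 0

/-- the singlet factor of `psiInit` at pair `j` -/
noncomputable def sF (κ m : ℕ) (f : Fin (κ + 2 * m) → Fin 2) (j : Fin m) : ℂ :=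
  singletAmp (f ⟨κ + 2 * (j : ℕ), by have := j.isLt; omega⟩)
    (f ⟨κ + 2 * (j : ℕ) + 1, by have := j.isLt; omega⟩)

lemma psiInit_eq (κ m : ℕ) (f : Fin (κ + 2 * m) → Fin 2) :
    psiInit κ m f = indC κ m f * ∏ j, sF κ m f j := rfl

lemma psiInit_update_one_lt (κ m : ℕ) (f : Fin (κ + 2 * m) → Fin 2) (i : Fin (κ + 2 * m))
    (hi : (i : ℕ) < κ) : psiInit κ m (Function.update f i 1) = 0 := by
  have hcond : ¬ ∀ i' : Fin (κ + 2 * m), (i' : ℕ) < κ → Function.update f i 1 i' = 0 := by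
    intro h
    have := h i hi
    rw [Function.update_self] at this
    exact absurd this (by decide)
  simp [psiInit, hcond]

lemma indC_update (κ m : ℕ) (f : Fin (κ + 2 * m) → Fin 2) (i0 : Fin (κ + 2 * m))
    (b : Fin 2) (h0 : κ ≤ (i0 : ℕ)) :
    indC κ m (Function.update f i0 b) = indC κ m f := by
  unfold indC
  refine if_congr ⟨fun h i' hi' => ?_, fun h i' hi' => ?_⟩ rfl rfl
  · have hne : i' ≠ i0 := fun he => by rw [he] at hi'; omega
    have := h i' hi'
    rwa [Function.update_of_ne hne] at this
  · have hne : i' ≠ i0 := fun he => by rw [he] at hi'; omega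
    rw [Function.update_of_ne hne]
    exact h i' hi'

lemma sF_update (κ m : ℕ) (f : Fin (κ + 2 * m) → Fin 2) (j : Fin m)
    (i0 : Fin (κ + 2 * m)) (b : Fin 2)
    (hi0 : (i0 : ℕ) = κ + 2 * (j : ℕ) ∨ (i0 : ℕ) = κ + 2 * (j : ℕ) + 1)
    (j' : Fin m) (hj' : j' ≠ j) :
    sF κ m (Function.update f i0 b) j' = sF κ m f j' := by
  have hj'j : (j' : ℕ) ≠ (j : ℕ) := fun h => hj' (Fin.ext h)
  have h1 : (⟨κ + 2 * (j' : ℕ), by have := j'.isLt; omega⟩ : Fin (κ + 2 * m)) ≠ i0 := by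
    intro h; rw [Fin.ext_iff] at h; simp only at h; omega
  have h2 : (⟨κ + 2 * (j' : ℕ) + 1, by have := j'.isLt; omega⟩ : Fin (κ + 2 * m)) ≠ i0 := by
    intro h; rw [Fin.ext_iff] at h; simp only at h; omega
  unfold sF
  rw [Function.update_of_ne h1, Function.update_of_ne h2]

set_option maxHeartbeats 1000000 in
lemma pair_sum (κ m : ℕ) (f : Fin (κ + 2 * m) → Fin 2) (j : Fin m) :
    (if f ⟨κ + 2 * (j : ℕ), by have := j.isLt; omega⟩ = 0 then
        psiInit κ m (Function.update f ⟨κ + 2 * (j : ℕ), by have := j.isLt; omega⟩ 1) else 0) +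
    (if f ⟨κ + 2 * (j : ℕ) + 1, by have := j.isLt; omega⟩ = 0 then
        psiInit κ m (Function.update f ⟨κ + 2 * (j : ℕ) + 1, by have := j.isLt; omega⟩ 1)
      else 0) = 0 := by
  classical
  have hj := j.isLt
  have hQP : (⟨κ + 2 * (j : ℕ) + 1, by omega⟩ : Fin (κ + 2 * m)) ≠ ⟨κ + 2 * (j : ℕ), by omega⟩ :=
    fun h => by rw [Fin.ext_iff] at h; simp only at h; omega
  have hPQ : (⟨κ + 2 * (j : ℕ), by omega⟩ : Fin (κ + 2 * m)) ≠ ⟨κ + 2 * (j : ℕ) + 1, by omega⟩ :=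
    fun h => hQP h.symm
  have hprodP : ∏ j', sF κ m (Function.update f ⟨κ + 2 * (j : ℕ), by omega⟩ 1) j' =
      singletAmp 1 (f ⟨κ + 2 * (j : ℕ) + 1, by omega⟩) *
        ∏ j' ∈ Finset.univ.erase j, sF κ m f j' := by
    rw [← Finset.mul_prod_erase Finset.univ _ (Finset.mem_univ j)]
    rw [Finset.prod_congr rfl fun j' hj' =>
      sF_update κ m f j _ 1 (Or.inl rfl) j' (Finset.mem_erase.mp hj').1]
    congr 1
    show singletAmp (Function.update f _ 1 ⟨κ + 2 * (j : ℕ), by omega⟩)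
      (Function.update f _ 1 ⟨κ + 2 * (j : ℕ) + 1, by omega⟩) = _
    rw [Function.update_self, Function.update_of_ne hQP]
  have hprodQ : ∏ j', sF κ m (Function.update f ⟨κ + 2 * (j : ℕ) + 1, by omega⟩ 1) j' =
      singletAmp (f ⟨κ + 2 * (j : ℕ), by omega⟩) 1 *
        ∏ j' ∈ Finset.univ.erase j, sF κ m f j' := by
    rw [← Finset.mul_prod_erase Finset.univ _ (Finset.mem_univ j)]
    rw [Finset.prod_congr rfl fun j' hj' =>
      sF_update κ m f j _ 1 (Or.inr rfl) j' (Finset.mem_erase.mp hj').1]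
    congr 1
    show singletAmp (Function.update f _ 1 ⟨κ + 2 * (j : ℕ), by omega⟩)
      (Function.update f _ 1 ⟨κ + 2 * (j : ℕ) + 1, by omega⟩) = _
    rw [Function.update_of_ne hPQ, Function.update_self]
  rw [psiInit_eq, psiInit_eq, hprodP, hprodQ,
    indC_update κ m f _ 1 (by simp only [Fin.val_mk]; omega),
    indC_update κ m f _ 1 (by simp only [Fin.val_mk]; omega)]
  have hp : f ⟨κ + 2 * (j : ℕ), by omega⟩ = 0 ∨ f ⟨κ + 2 * (j : ℕ), by omega⟩ = 1 := by omega
  have hq : f ⟨κ + 2 * (j : ℕ) + 1, by omega⟩ = 0 ∨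
      f ⟨κ + 2 * (j : ℕ) + 1, by omega⟩ = 1 := by omega
  rcases hp with h | h <;> rcases hq with h' | h' <;>
    simp [h, h', singletAmp, show ¬(1 : Fin 2) = 0 by decide]

set_option maxHeartbeats 1000000 in
theorem stmt_14 (κ m : ℕ) :
    psiInit κ m ≠ 0 ∧
    (∑ i : Fin (κ + 2 * m),
        (SpinX (κ + 2 * m) i + Complex.I • SpinY (κ + 2 * m) i)).mulVec (psiInit κ m) = 0 ∧
    (∑ i : Fin (κ + 2 * m), SpinZ (κ + 2 * m) i).mulVec (psiInit κ m) =
      ((κ : ℂ) / 2) • psiInit κ m := by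
  classical
  refine ⟨?_, ?_, ?_⟩
  · -- nonvanishing
    intro h
    have h1 : psiInit κ m (fun i => if κ ≤ (i : ℕ) ∧ ((i : ℕ) - κ) % 2 = 1 then 1 else 0)
        = ((1 / Real.sqrt 2 : ℝ) : ℂ) ^ m := by
      rw [psiInit_eq]
      have hA : indC κ m (fun i => if κ ≤ (i : ℕ) ∧ ((i : ℕ) - κ) % 2 = 1 then 1 else 0)
          = 1 := by
        unfold indC
        rw [if_pos]
        intro i hi
        show (if κ ≤ (i : ℕ) ∧ ((i : ℕ) - κ) % 2 = 1 then (1 : Fin 2) else 0) = 0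
        rw [if_neg]
        omega
      rw [hA, one_mul]
      rw [Finset.prod_congr rfl fun j _ => show
          sF κ m (fun i => if κ ≤ (i : ℕ) ∧ ((i : ℕ) - κ) % 2 = 1 then 1 else 0) j =
            ((1 / Real.sqrt 2 : ℝ) : ℂ) from ?_]
      · rw [Finset.prod_const, Finset.card_univ, Fintype.card_fin]
      · show singletAmp
            (if κ ≤ κ + 2 * (j : ℕ) ∧ (κ + 2 * (j : ℕ) - κ) % 2 = 1 then 1 else 0)
            (if κ ≤ κ + 2 * (j : ℕ) + 1 ∧ (κ + 2 * (j : ℕ) + 1 - κ) % 2 = 1 then 1 else 0) = _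
        rw [if_neg (by omega), if_pos (by constructor <;> omega)]
        simp [singletAmp]
    have h2 := congrFun h (fun i => if κ ≤ (i : ℕ) ∧ ((i : ℕ) - κ) % 2 = 1 then 1 else 0)
    rw [h1] at h2
    have hx : ((1 / Real.sqrt 2 : ℝ) : ℂ) ≠ 0 := by
      rw [Ne, Complex.ofReal_eq_zero]
      positivity
    exact pow_ne_zero m hx h2
  · -- raising operator annihilates
    rw [aux_sum_mulVec]
    funext f
    rw [Finset.sum_apply]
    rw [Finset.sum_congr rfl fun i _ => raise_mulVec (κ + 2 * m) i (psiInit κ m) f]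
    rw [sum_sites κ m
      (fun i => if f i = 0 then psiInit κ m (Function.update f i 1) else 0)]
    simp only [Pi.zero_apply]
    have hA : ∀ i : Fin κ,
        (if f ⟨(i : ℕ), by omega⟩ = 0 then
          psiInit κ m (Function.update f ⟨(i : ℕ), by omega⟩ 1) else 0) = 0 := by
      intro i
      rw [psiInit_update_one_lt κ m f _ i.isLt]
      simp
    rw [Finset.sum_congr rfl fun i _ => hA i,
      Finset.sum_congr rfl fun j _ => pair_sum κ m f j]
    simp
  · -- z-spin eigenvector
    rw [aux_sum_mulVec]
    funext f
    rw [Finset.sum_apply]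
    rw [Finset.sum_congr rfl fun i _ => spinZ_mulVec (κ + 2 * m) i (psiInit κ m) f]
    rw [← Finset.sum_mul, Pi.smul_apply, smul_eq_mul]
    by_cases hψ : psiInit κ m f = 0
    · rw [hψ, mul_zero, mul_zero]
    · congr 1
      by_cases hA : ∀ i : Fin (κ + 2 * m), (i : ℕ) < κ → f i = 0
      · rw [sum_sites κ m (fun i => if f i = 0 then (1/2 : ℂ) else -(1/2))]
        have h1 : ∀ i : Fin κ,
            (if f ⟨(i : ℕ), by omega⟩ = 0 then (1/2 : ℂ) else -(1/2)) = 1/2 := by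
          intro i
          rw [if_pos (hA _ i.isLt)]
        have h2 : ∀ j : Fin m,
            ((if f ⟨κ + 2 * (j : ℕ), by have := j.isLt; omega⟩ = 0 then (1/2 : ℂ) else -(1/2)) +
              (if f ⟨κ + 2 * (j : ℕ) + 1, by have := j.isLt; omega⟩ = 0 then (1/2 : ℂ)
                else -(1/2))) = 0 := by
          intro j
          have hj := j.isLt
          have hne : sF κ m f j ≠ 0 := by
            intro h0
            exact hψ (by rw [psiInit_eq, Finset.prod_eq_zero (Finset.mem_univ j) h0, mul_zero])
          unfold sF at hne
          have hp : f ⟨κ + 2 * (j : ℕ), by omega⟩ = 0 ∨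
              f ⟨κ + 2 * (j : ℕ), by omega⟩ = 1 := by omega
          have hq : f ⟨κ + 2 * (j : ℕ) + 1, by omega⟩ = 0 ∨
              f ⟨κ + 2 * (j : ℕ) + 1, by omega⟩ = 1 := by omega
          rcases hp with h | h <;> rcases hq with h' | h' <;>
            simp [h, h', singletAmp, show ¬(1 : Fin 2) = 0 by decide,
              show ¬(0 : Fin 2) = 1 by decide] at hne ⊢
        rw [Finset.sum_congr rfl fun i _ => h1 i, Finset.sum_congr rfl fun j _ => h2 j,
          Finset.sum_const, Finset.sum_const, Finset.card_univ, Fintype.card_fin, smul_zero,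
          add_zero, nsmul_eq_mul]
        ring
      · exact absurd (by simp [psiInit_eq, indC, hA]) hψ
end
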